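/- Let n ≥ 3 be an integer. If n is odd, then the clique number and the chromatic number of the permutability graph of subgroups Γ(D_n) of the dihedral group D_n both equal 2(τ(n) − 1). If n = 2^α n' with n' odd and α ≥ 1, then both equal τ(n) + (2α + 1)τ(n') − 2. In particular, Γ(D_n) is weakly perfect. -/

import Mathlib

open scoped Pointwise

/-- The permutability graph of non-normal subgroups `Γ_N(G)`: vertices are the
non-normal (hence proper) subgroups of `G`, and two distinct vertices are adjacent
iff the corresponding subgroups permute, i.e. `HK = KH` as subsets of `G`. -/
def permGraphN (G : Type*) [Group G] :
    SimpleGraph {H : Subgroup G // ¬ H.Normal} where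
  Adj H K := H ≠ K ∧ (H.1 : Set G) * (K.1 : Set G) = (K.1 : Set G) * (H.1 : Set G)
  symm := ⟨fun _ _ ⟨hne, h⟩ => ⟨hne.symm, h.symm⟩⟩
  loopless := ⟨fun _ ⟨hne, _⟩ => hne rfl⟩

/-- The permutability graph of subgroups `Γ(G)`: vertices are the proper nontrivial
subgroups of `G`, and two distinct vertices are adjacent iff the corresponding
subgroups permute, i.e. `HK = KH` as subsets of `G`. -/
def permGraph (G : Type*) [Group G] :
    SimpleGraph {H : Subgroup G // H ≠ ⊥ ∧ H ≠ ⊤} where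
  Adj H K := H ≠ K ∧ (H.1 : Set G) * (K.1 : Set G) = (K.1 : Set G) * (H.1 : Set G)
  symm := ⟨fun _ _ ⟨hne, h⟩ => ⟨hne.symm, h.symm⟩⟩
  loopless := ⟨fun _ ⟨hne, _⟩ => hne rfl⟩

/-!
Every subgroup of `D_n` is either a rotation subgroup `⟨r^d⟩` or a dihedral subgroup
`⟨r^d, s r^i⟩` with `d ∣ n`, and it is determined by `d` and `i mod d`. Rotation subgroups are
normal, so they permute with everything, and `⟨r^d, s r^i⟩`, `⟨r^e, s r^j⟩` permute as soon as
`2i ≡ 0 mod d` and `2j ≡ 0 mod e`. This gives a clique of size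
`(τ(n) - 1) + (τ(n) - 1) + #{d ∣ n | d even}`.
Conversely, if two distinct dihedral subgroups with the same rotation part `⟨r^d⟩` permute,
then `d` is even and their offsets differ by `d/2 mod d`. Hence colouring a subgroup by its type,
the index `d` of its rotation part and, for even `d`, the half of `[0, d)` containing its offset,
is a proper colouring with the same number of colours. For `n = 2^α n'` there are `α τ(n')` even
divisors.
-/

namespace Subgroup
variable {G : Type*} [Group G]

def Permute (H K : Subgroup G) : Prop := (H : Set G) * (K : Set G) = (K : Set G) * (H : Set G)

theorem Permute.symm {H K : Subgroup G} (h : H.Permute K) : K.Permute H := Eq.symm h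

theorem permute_of_normal (H N : Subgroup G) [N.Normal] : H.Permute N := by
  rw [Permute, ← mul_normal, ← normal_mul, sup_comm]

end Subgroup

namespace ZMod
open AddSubgroup
variable {n : ℕ}

theorem intCast_mem_addSubgroup_iff (S : AddSubgroup (ZMod n)) (x : ℤ) :
    (x : ZMod n) ∈ S ↔ (S.index : ℤ) ∣ x := by
  obtain ⟨a, ha⟩ := Int.subgroup_cyclic (S.comap (Int.castAddHom (ZMod n)))
  rw [← zmultiples_eq_closure] at ha
  have hindex : S.index = a.natAbs := by
    rw [← S.index_comap_of_surjective (f := Int.castAddHom (ZMod n)) ZMod.intCast_surjective,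
      ha, Int.index_zmultiples]
  rw [hindex, Int.natCast_natAbs, abs_dvd, ← Int.mem_zmultiples_iff, ← ha]
  rfl

theorem addSubgroup_eq_of_index_eq {S T : AddSubgroup (ZMod n)} (h : S.index = T.index) :
    S = T := by
  ext x
  obtain ⟨x, rfl⟩ := ZMod.intCast_surjective x
  rw [intCast_mem_addSubgroup_iff, intCast_mem_addSubgroup_iff, h]

theorem index_dvd (S : AddSubgroup (ZMod n)) : S.index ∣ n := by
  have h : ((n : ℤ) : ZMod n) ∈ S := by simp
  exact_mod_cast (intCast_mem_addSubgroup_iff S n).1 h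

theorem intCast_mem_zmultiples_natCast_iff {d : ℕ} (hd : d ∣ n) (x : ℤ) :
    (x : ZMod n) ∈ zmultiples (d : ZMod n) ↔ (d : ℤ) ∣ x := by
  simp only [mem_zmultiples_iff, zsmul_eq_mul]
  constructor
  · rintro ⟨k, hk⟩
    have : ((k * d : ℤ) : ZMod n) = x := by push_cast; exact hk
    rw [ZMod.intCast_eq_intCast_iff_dvd_sub] at this
    have := (Int.natCast_dvd_natCast.2 hd).trans this
    simpa using (dvd_sub_left (dvd_mul_left _ k)).1 this
  · rintro ⟨c, rfl⟩
    exact ⟨c, by push_cast; ring⟩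

theorem index_zmultiples_natCast {d : ℕ} (hd : d ∣ n) : (zmultiples (d : ZMod n)).index = d := by
  apply Nat.dvd_antisymm
  · exact_mod_cast (intCast_mem_addSubgroup_iff _ d).1 (by simp)
  · have := (intCast_mem_addSubgroup_iff (zmultiples (d : ZMod n)) _).2 dvd_rfl
    exact_mod_cast (intCast_mem_zmultiples_natCast_iff hd _).1 this

end ZMod

theorem Int.two_dvd_and_odd_ediv_half_iff {d a b : ℤ} (h2 : d ∣ 2 * (b - a))
    (h1 : ¬ d ∣ b - a) : 2 ∣ d ∧ (Odd (a / (d / 2)) ↔ ¬ Odd (b / (d / 2))) := by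
  obtain ⟨m, hm⟩ := h2
  obtain ⟨u, rfl⟩ : Odd m := by
    rw [← Int.not_even_iff_odd]
    rintro ⟨u, rfl⟩
    exact h1 ⟨u, by linarith⟩
  obtain ⟨c, rfl⟩ : 2 ∣ d := ⟨b - a - d * u, by linarith⟩
  have hc : c ≠ 0 := by
    rintro rfl
    exact h1 ⟨0, by linarith⟩
  have hb : b = a + c * (2 * u + 1) := by linarith
  refine ⟨dvd_mul_right 2 c, ?_⟩
  rw [Int.mul_ediv_cancel_left _ two_ne_zero, hb, Int.add_mul_ediv_left _ _ hc, Int.odd_add']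
  simp [parity_simps]

theorem Int.odd_ediv_half_iff_of_dvd_sub {d a b : ℤ} (hd : 2 ∣ d) (h : d ∣ b - a) :
    Odd (a / (d / 2)) ↔ Odd (b / (d / 2)) := by
  obtain ⟨c, rfl⟩ := hd
  obtain ⟨k, hk⟩ := h
  rw [Int.mul_ediv_cancel_left _ two_ne_zero, show b = a + c * (2 * k) by linarith]
  rcases eq_or_ne c 0 with rfl | hc
  · simp
  · rw [Int.add_mul_ediv_left _ _ hc, Int.odd_add]
    simp

namespace SimpleGraph
variable {V ι : Type*} [Fintype ι] {G : SimpleGraph V}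

theorem Coloring.chromaticNumber_eq_card_of_pairwise_adj (C : G.Coloring ι) (f : ι → V)
    (hf : Pairwise fun a b => G.Adj (f a) (f b)) : G.chromaticNumber = Fintype.card ι :=
  C.colorable.chromaticNumber_le.antisymm
    (le_chromaticNumber_of_pairwise_adj (Nat.card_eq_fintype_card).ge f hf)

theorem Coloring.cliqueNum_eq_card_of_pairwise_adj [Finite V] (C : G.Coloring ι) (f : ι → V)
    (hf : Pairwise fun a b => G.Adj (f a) (f b)) : G.cliqueNum = Fintype.card ι := by
  refine le_antisymm ?_ ?_
  · obtain ⟨s, hs⟩ := G.exists_isNClique_cliqueNum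
    exact hs.card_eq ▸ hs.isClique.card_le_of_coloring C
  · have hinj : Function.Injective f := fun a b hab => by
      by_contra hne
      exact (hf hne).ne hab
    have hclique : G.IsClique (Finset.univ.map ⟨f, hinj⟩ : Finset V) := by
      intro x hx y hy hxy
      simp only [Finset.coe_map, Function.Embedding.coeFn_mk, Finset.coe_univ, Set.image_univ,
        Set.mem_range] at hx hy
      obtain ⟨a, rfl⟩ := hx
      obtain ⟨b, rfl⟩ := hy
      exact hf (fun h => hxy (h ▸ rfl))
    simpa using hclique.card_le_cliqueNum

end SimpleGraph

namespace Nat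

theorem filter_not_even_divisors_two_pow_mul {n' : ℕ} (hn' : Odd n') (α : ℕ) :
    (2 ^ α * n').divisors.filter (¬ Even ·) = n'.divisors := by
  ext d
  simp only [Finset.mem_filter, mem_divisors, not_even_iff_odd, mul_ne_zero_iff, ne_eq,
    pow_eq_zero_iff', OfNat.ofNat_ne_zero, false_and, not_false_eq_true, true_and]
  constructor
  · rintro ⟨⟨hd, hn'0⟩, hodd⟩
    exact ⟨(Coprime.pow_right α hodd.coprime_two_right).dvd_of_dvd_mul_left hd, hn'0⟩
  · rintro ⟨hd, hn'0⟩
    exact ⟨⟨hd.mul_left _, hn'0⟩, hn'.of_dvd_nat hd⟩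

theorem card_divisors_two_pow_mul {n' : ℕ} (hn' : Odd n') (α : ℕ) :
    (2 ^ α * n').divisors.card = (α + 1) * n'.divisors.card := by
  rw [Coprime.card_divisors_mul (Coprime.pow_left α (coprime_two_left.2 hn')),
    divisors_prime_pow prime_two, Finset.card_map, Finset.card_range]

theorem card_filter_even_divisors_two_pow_mul {n' : ℕ} (hn' : Odd n') (α : ℕ) :
    ((2 ^ α * n').divisors.filter Even).card = α * n'.divisors.card := by
  have := Finset.card_filter_add_card_filter_not (s := (2 ^ α * n').divisors) Even
  rw [filter_not_even_divisors_two_pow_mul hn', card_divisors_two_pow_mul hn'] at this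
  linarith

end Nat

namespace DihedralGroup
open AddSubgroup
variable {n : ℕ}

def rotations (H : Subgroup (DihedralGroup n)) : AddSubgroup (ZMod n) where
  carrier := {k | r k ∈ H}
  zero_mem' := H.one_mem
  add_mem' ha hb := by simpa [r_mul_r] using H.mul_mem ha hb
  neg_mem' ha := by simpa [inv_r] using H.inv_mem ha

@[simp] lemma mem_rotations {H : Subgroup (DihedralGroup n)} {k : ZMod n} :
    k ∈ rotations H ↔ r k ∈ H := Iff.rfl

def rotationSubgroup (S : AddSubgroup (ZMod n)) : Subgroup (DihedralGroup n) where
  carrier := {x | match x with | r k => k ∈ S | sr _ => False}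
  one_mem' := S.zero_mem
  mul_mem' := by
    rintro (a | a) (b | b) ha hb <;> simp_all [r_mul_r, S.add_mem]
  inv_mem' := by
    rintro (a | a) ha <;> simp_all [inv_r]

@[simp] lemma r_mem_rotationSubgroup {S : AddSubgroup (ZMod n)} {k : ZMod n} :
    r k ∈ rotationSubgroup S ↔ k ∈ S := Iff.rfl

@[simp] lemma sr_notMem_rotationSubgroup {S : AddSubgroup (ZMod n)} {k : ZMod n} :
    sr k ∉ rotationSubgroup S := id

def dihedralSubgroup (S : AddSubgroup (ZMod n)) (i : ZMod n) : Subgroup (DihedralGroup n) where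
  carrier := {x | match x with | r k => k ∈ S | sr k => k - i ∈ S}
  one_mem' := S.zero_mem
  mul_mem' := by
    rintro (a | a) (b | b) ha hb <;>
      simp only [Set.mem_ofPred_eq, r_mul_r, r_mul_sr, sr_mul_r, sr_mul_sr] at ha hb ⊢
    · exact S.add_mem ha hb
    · simpa [sub_sub, add_comm] using S.sub_mem hb ha
    · simpa [add_sub_right_comm] using S.add_mem ha hb
    · simpa using S.sub_mem hb ha
  inv_mem' := by
    rintro (a | a) ha <;> simp_all [inv_r, inv_sr]

@[simp] lemma r_mem_dihedralSubgroup {S : AddSubgroup (ZMod n)} {i k : ZMod n} :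
    r k ∈ dihedralSubgroup S i ↔ k ∈ S := Iff.rfl

@[simp] lemma sr_mem_dihedralSubgroup {S : AddSubgroup (ZMod n)} {i k : ZMod n} :
    sr k ∈ dihedralSubgroup S i ↔ k - i ∈ S := Iff.rfl

@[simp] lemma rotations_rotationSubgroup (S : AddSubgroup (ZMod n)) :
    rotations (rotationSubgroup S) = S := rfl

@[simp] lemma rotations_dihedralSubgroup (S : AddSubgroup (ZMod n)) (i : ZMod n) :
    rotations (dihedralSubgroup S i) = S := rfl

instance (S : AddSubgroup (ZMod n)) : (rotationSubgroup S).Normal where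
  conj_mem := by
    rintro (k | k) hk (g | g) <;> simp_all [inv_r, inv_sr, r_mul_r, sr_mul_r, sr_mul_sr]

lemma eq_rotationSubgroup_rotations {H : Subgroup (DihedralGroup n)} (h : ¬ ∃ k, sr k ∈ H) :
    H = rotationSubgroup (rotations H) := by
  ext (k | k) <;> simp [not_exists.1 h]

lemma sub_mem_rotations {H : Subgroup (DihedralGroup n)} {i k : ZMod n} (hi : sr i ∈ H)
    (hk : sr k ∈ H) : k - i ∈ rotations H := by
  simpa [sr_mul_sr] using H.mul_mem hi hk

lemma eq_dihedralSubgroup_rotations {H : Subgroup (DihedralGroup n)} {i : ZMod n}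
    (hi : sr i ∈ H) : H = dihedralSubgroup (rotations H) i := by
  ext (k | k)
  · rfl
  · refine ⟨sub_mem_rotations hi, fun hk => ?_⟩
    simpa [sr_mul_r] using H.mul_mem hi hk

@[simp] lemma rotations_bot : rotations (⊥ : Subgroup (DihedralGroup n)) = ⊥ := by
  ext k
  simp [one_def, -r_zero]

@[simp] lemma rotations_top : rotations (⊤ : Subgroup (DihedralGroup n)) = ⊤ := by
  ext k
  simp

@[simp] lemma rotationSubgroup_bot : rotationSubgroup (⊥ : AddSubgroup (ZMod n)) = ⊥ := by
  ext (k | k) <;> simp [one_def, -r_zero]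

@[simp] lemma dihedralSubgroup_top (i : ZMod n) :
    dihedralSubgroup (⊤ : AddSubgroup (ZMod n)) i = ⊤ := by
  ext (k | k) <;> simp

lemma sr_neg_mem_dihedralSubgroup {S : AddSubgroup (ZMod n)} {i a : ZMod n} (hi : i + i ∈ S)
    (ha : sr a ∈ dihedralSubgroup S i) : sr (-a) ∈ dihedralSubgroup S i := by
  have : -a - i = -(a - i) - (i + i) := by ring
  simpa [this] using S.sub_mem (S.neg_mem ha) hi

lemma dihedralSubgroup_permute {S T : AddSubgroup (ZMod n)} {i j : ZMod n} (hi : i + i ∈ S)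
    (hj : j + j ∈ T) :
    (dihedralSubgroup S i).Permute (dihedralSubgroup T j) := by
  suffices key : ∀ {S T : AddSubgroup (ZMod n)} {i j : ZMod n}, i + i ∈ S → j + j ∈ T →
      (dihedralSubgroup S i : Set (DihedralGroup n)) * dihedralSubgroup T j ⊆
        dihedralSubgroup T j * dihedralSubgroup S i from
    (key hi hj).antisymm (key hj hi)
  intro S T i j hi hj
  rintro _ ⟨x, hx, y, hy, rfl⟩
  rcases x with a | a <;> rcases y with b | b
  · exact ⟨r b, hy, r a, hx, by simp [r_mul_r, add_comm]⟩
  · exact ⟨sr b, hy, r (-a), S.neg_mem hx, by simp [r_mul_sr, sr_mul_r, sub_eq_add_neg]⟩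
  · exact ⟨r (-b), T.neg_mem hy, sr a, hx, by simp [r_mul_sr, sr_mul_r]⟩
  · refine ⟨sr (-b), sr_neg_mem_dihedralSubgroup hj hy, sr (-a),
      sr_neg_mem_dihedralSubgroup hi hx, ?_⟩
    simp only [sr_mul_sr]
    congr 1
    ring

lemma sub_notMem_and_add_self_mem_rotations_of_permute {H K : Subgroup (DihedralGroup n)}
    (hS : rotations H = rotations K) {i j : ZMod n} (hi : sr i ∈ H) (hj : sr j ∈ K) (hne : H ≠ K)
    (hperm : H.Permute K) :
    j - i ∉ rotations H ∧ (j - i) + (j - i) ∈ rotations H := by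
  have hΔ : j - i ∉ rotations H := by
    intro hji
    refine hne (Subgroup.ext fun x => ?_)
    rw [eq_dihedralSubgroup_rotations hi, eq_dihedralSubgroup_rotations hj, ← hS]
    rcases x with k | k
    · rfl
    · rw [sr_mem_dihedralSubgroup, sr_mem_dihedralSubgroup, ← sub_add_sub_cancel k j i,
        (rotations H).add_mem_cancel_right hji]
  refine ⟨hΔ, ?_⟩
  -- Write `sr j * sr i ∈ K * H = H * K` as `x * y`: two rotations would put `j - i` in
  -- `rotations H`, two reflections put `2 (j - i)` there.
  obtain ⟨x, hx, y, hy, hxy⟩ : sr j * sr i ∈ (H : Set (DihedralGroup n)) * K :=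
    hperm ▸ Set.mul_mem_mul hj hi
  rw [sr_mul_sr] at hxy
  rcases x with a | a <;> rcases y with b | b <;>
    simp only [r_mul_r, r_mul_sr, sr_mul_r, sr_mul_sr, r.injEq, reduceCtorEq] at hxy
  · refine absurd ?_ hΔ
    have : j - i = -(a + b) := by rw [hxy]; ring
    rw [this]
    exact (rotations H).neg_mem ((rotations H).add_mem hx (hS ▸ hy))
  · have : (j - i) + (j - i) = (a - i) - (b - j) := by linear_combination hxy
    rw [this]
    exact (rotations H).sub_mem (sub_mem_rotations hi hx) (hS ▸ sub_mem_rotations hj hy)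

/-- For even index `d` of the rotation part: the reflections `sr i` of `H` have
`i mod d ∈ [d/2, d)`, i.e. `⌊i / (d/2)⌋` is odd (this does not depend on the choice of `i`). -/
def ReflectionsInUpperHalf (H : Subgroup (DihedralGroup n)) : Prop :=
  Even (rotations H).index ∧
    ∃ i : ℤ, sr (i : ZMod n) ∈ H ∧ Odd (i / ((rotations H).index / 2 : ℤ))

lemma reflectionsInUpperHalf_iff {H : Subgroup (DihedralGroup n)} {i : ℤ}
    (hi : sr (i : ZMod n) ∈ H) :
    ReflectionsInUpperHalf H ↔
      Even (rotations H).index ∧ Odd (i / ((rotations H).index / 2 : ℤ)) := by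
  refine ⟨fun ⟨heven, i', hi', hodd⟩ => ⟨heven, ?_⟩, fun ⟨heven, hodd⟩ => ⟨heven, i, hi, hodd⟩⟩
  have hdvd : ((rotations H).index : ℤ) ∣ i - i' := by
    rw [← ZMod.intCast_mem_addSubgroup_iff, Int.cast_sub]
    exact sub_mem_rotations hi' hi
  exact (Int.odd_ediv_half_iff_of_dvd_sub (by exact_mod_cast heven.two_dvd) hdvd).1 hodd

lemma reflectionsInUpperHalf_iff_not_of_permute {H K : Subgroup (DihedralGroup n)}
    (hS : rotations H = rotations K) (hH : ∃ i, sr i ∈ H) (hK : ∃ j, sr j ∈ K) (hne : H ≠ K)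
    (hperm : H.Permute K) : ReflectionsInUpperHalf H ↔ ¬ ReflectionsInUpperHalf K := by
  obtain ⟨i, hi⟩ := hH
  obtain ⟨j, hj⟩ := hK
  obtain ⟨i, rfl⟩ := ZMod.intCast_surjective i
  obtain ⟨j, rfl⟩ := ZMod.intCast_surjective j
  obtain ⟨h1, h2⟩ := sub_notMem_and_add_self_mem_rotations_of_permute hS hi hj hne hperm
  rw [← Int.cast_sub, ← Int.cast_add, ZMod.intCast_mem_addSubgroup_iff, ← two_mul] at h2
  rw [← Int.cast_sub, ZMod.intCast_mem_addSubgroup_iff] at h1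
  obtain ⟨heven, hiff⟩ := Int.two_dvd_and_odd_ediv_half_iff h2 h1
  rw [reflectionsInUpperHalf_iff hi, reflectionsInUpperHalf_iff hj, ← hS, hiff]
  have : Even (rotations H).index := by exact_mod_cast even_iff_two_dvd.2 heven
  simp [this]

open Classical in
noncomputable def colour (H : Subgroup (DihedralGroup n)) : ℕ ⊕ ℕ ⊕ ℕ :=
  if ∃ i, sr i ∈ H then
    if ReflectionsInUpperHalf H then .inr (.inr (rotations H).index)
    else .inr (.inl (rotations H).index)
  else .inl (rotations H).index

lemma colour_ne_of_permute {H K : Subgroup (DihedralGroup n)} (hne : H ≠ K)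
    (hperm : H.Permute K) : colour H ≠ colour K := by
  intro hcol
  unfold colour at hcol
  split_ifs at hcol with hH hupH hK hupK hK hupK hK <;>
    simp only [Sum.inl.injEq, Sum.inr.injEq, reduceCtorEq] at hcol <;>
    have hS := ZMod.addSubgroup_eq_of_index_eq hcol
  · exact (reflectionsInUpperHalf_iff_not_of_permute hS hH hK hne hperm).1 hupH hupK
  · exact hupH ((reflectionsInUpperHalf_iff_not_of_permute hS hH hK hne hperm).2 hupK)
  · exact hne (by rw [eq_rotationSubgroup_rotations hH, eq_rotationSubgroup_rotations hK, hS])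

def palette (n : ℕ) : Finset (ℕ ⊕ ℕ ⊕ ℕ) :=
  (n.divisors.erase n).disjSum ((n.divisors.erase 1).disjSum (n.divisors.filter Even))

def paletteSubgroup : ℕ ⊕ ℕ ⊕ ℕ → Subgroup (DihedralGroup n)
  | .inl d => rotationSubgroup (zmultiples (d : ZMod n))
  | .inr (.inl d) => dihedralSubgroup (zmultiples (d : ZMod n)) 0
  | .inr (.inr d) => dihedralSubgroup (zmultiples (d : ZMod n)) (((d : ℤ) / 2 : ℤ) : ZMod n)

lemma colour_paletteSubgroup {c : ℕ ⊕ ℕ ⊕ ℕ} (hc : c ∈ palette n) :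
    colour (paletteSubgroup c : Subgroup (DihedralGroup n)) = c := by
  rcases c with d | d | d <;>
    simp only [palette, Finset.inl_mem_disjSum, Finset.inr_mem_disjSum, Finset.mem_erase,
      Finset.mem_filter, Nat.mem_divisors] at hc
  · simp [colour, paletteSubgroup, ZMod.index_zmultiples_natCast hc.2.1]
  · have hi : sr ((0 : ℤ) : ZMod n) ∈ dihedralSubgroup (zmultiples (d : ZMod n)) 0 := by simp
    rw [paletteSubgroup, colour, if_pos ⟨_, hi⟩, if_neg (by simp [reflectionsInUpperHalf_iff hi]),
      rotations_dihedralSubgroup, ZMod.index_zmultiples_natCast hc.2.1]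
  · have hi : sr (((d : ℤ) / 2 : ℤ) : ZMod n) ∈
        dihedralSubgroup (zmultiples (d : ZMod n)) (((d : ℤ) / 2 : ℤ) : ZMod n) := by simp
    have hd0 : (d : ℤ) / 2 ≠ 0 := by
      have := Nat.pos_of_dvd_of_pos hc.1.1 (Nat.pos_of_ne_zero hc.1.2)
      obtain ⟨k, rfl⟩ := hc.2
      omega
    have hupper : ReflectionsInUpperHalf
        (dihedralSubgroup (zmultiples (d : ZMod n)) (((d : ℤ) / 2 : ℤ) : ZMod n)) := by
      simp [reflectionsInUpperHalf_iff hi, ZMod.index_zmultiples_natCast hc.1.1, hc.2,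
        Int.ediv_self hd0]
    rw [paletteSubgroup, colour, if_pos ⟨_, hi⟩, if_pos hupper, rotations_dihedralSubgroup,
      ZMod.index_zmultiples_natCast hc.1.1]

lemma colour_mem_palette_iff [NeZero n] {H : Subgroup (DihedralGroup n)} :
    colour H ∈ palette n ↔ H ≠ ⊥ ∧ H ≠ ⊤ := by
  have hbot : (⊥ : AddSubgroup (ZMod n)).index = n := by simp [AddSubgroup.index_bot]
  refine ⟨fun h => ⟨?_, ?_⟩, fun ⟨hH, hH'⟩ => ?_⟩
  · rintro rfl
    have : ¬ ∃ i, sr i ∈ (⊥ : Subgroup (DihedralGroup n)) := by simp [one_def, -r_zero]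
    rw [colour, if_neg this, rotations_bot, hbot] at h
    simp [palette] at h
  · rintro rfl
    have : ∃ i, sr i ∈ (⊤ : Subgroup (DihedralGroup n)) := ⟨0, trivial⟩
    rw [colour, if_pos this] at h
    split_ifs at h <;> simp [palette] at h
  have hd : (rotations H).index ∈ n.divisors :=
    Nat.mem_divisors.2 ⟨ZMod.index_dvd _, NeZero.ne n⟩
  unfold colour
  split_ifs with hsr hupper
  · simp [palette, hd, hupper.1]
  · obtain ⟨i, hi⟩ := hsr
    refine Finset.inr_mem_disjSum.2 (Finset.inl_mem_disjSum.2 (Finset.mem_erase.2 ⟨?_, hd⟩))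
    intro h1
    rw [AddSubgroup.index_eq_one] at h1
    exact hH' (by rw [eq_dihedralSubgroup_rotations hi, h1, dihedralSubgroup_top])
  · refine Finset.inl_mem_disjSum.2 (Finset.mem_erase.2 ⟨?_, hd⟩)
    intro hn
    have : rotations H = ⊥ := ZMod.addSubgroup_eq_of_index_eq (hn.trans hbot.symm)
    exact hH (by rw [eq_rotationSubgroup_rotations hsr, this, rotationSubgroup_bot])

lemma exists_dihedralSubgroup_eq {c : ℕ ⊕ ℕ} (hc : .inr c ∈ palette n) :
    ∃ S i, i + i ∈ S ∧ (paletteSubgroup (.inr c) : Subgroup (DihedralGroup n)) =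
      dihedralSubgroup S i := by
  rcases c with d | d
  · exact ⟨_, 0, by simp, rfl⟩
  · simp only [palette, Finset.inr_mem_disjSum, Finset.mem_filter, Nat.mem_divisors] at hc
    refine ⟨_, _, ?_, rfl⟩
    obtain ⟨k, hk⟩ := hc.2
    rw [← Int.cast_add, ZMod.intCast_mem_zmultiples_natCast_iff hc.1.1]
    exact ⟨1, by omega⟩

lemma paletteSubgroup_permute {c c' : ℕ ⊕ ℕ ⊕ ℕ} (hc : c ∈ palette n) (hc' : c' ∈ palette n) :
    (paletteSubgroup c : Subgroup (DihedralGroup n)).Permute (paletteSubgroup c') := by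
  rcases c with d | c <;> rcases c' with d' | c'
  · exact Subgroup.permute_of_normal _ (rotationSubgroup _)
  · exact (Subgroup.permute_of_normal _ (rotationSubgroup _)).symm
  · exact Subgroup.permute_of_normal _ (rotationSubgroup _)
  · obtain ⟨S, i, hi, hS⟩ := exists_dihedralSubgroup_eq hc
    obtain ⟨T, j, hj, hT⟩ := exists_dihedralSubgroup_eq hc'
    rw [hS, hT]
    exact dihedralSubgroup_permute hi hj

section
variable [NeZero n]

noncomputable def permGraphColoring : (permGraph (DihedralGroup n)).Coloring (palette n) :=
  SimpleGraph.Coloring.mk (fun H => ⟨colour H.1, colour_mem_palette_iff.2 H.2⟩) fun hadj h =>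
    colour_ne_of_permute (fun h' => hadj.1 (Subtype.ext h')) hadj.2 (congrArg Subtype.val h)

def paletteVertex (c : palette n) : {H : Subgroup (DihedralGroup n) // H ≠ ⊥ ∧ H ≠ ⊤} :=
  ⟨paletteSubgroup c, colour_mem_palette_iff.1 (by rw [colour_paletteSubgroup c.2]; exact c.2)⟩

lemma pairwise_adj_paletteVertex :
    Pairwise fun c c' : palette n => (permGraph (DihedralGroup n)).Adj (paletteVertex c)
      (paletteVertex c') := by
  intro c c' hne
  refine ⟨fun h => hne (Subtype.ext ?_), paletteSubgroup_permute c.2 c'.2⟩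
  rw [← colour_paletteSubgroup c.2, ← colour_paletteSubgroup c'.2]
  exact congrArg (colour ∘ Subtype.val) h

theorem cliqueNum_permGraph : (permGraph (DihedralGroup n)).cliqueNum = (palette n).card := by
  rw [permGraphColoring.cliqueNum_eq_card_of_pairwise_adj _ pairwise_adj_paletteVertex,
    Fintype.card_coe]

theorem chromaticNumber_permGraph :
    (permGraph (DihedralGroup n)).chromaticNumber = (palette n).card := by
  rw [permGraphColoring.chromaticNumber_eq_card_of_pairwise_adj _ pairwise_adj_paletteVertex,
    Fintype.card_coe]

end

theorem card_palette {α n' : ℕ} (hn' : Odd n') (h : n = 2 ^ α * n') :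
    (palette n).card = n.divisors.card + (2 * α + 1) * n'.divisors.card - 2 := by
  have hn0 : n ≠ 0 := by simp [h, hn'.pos.ne']
  have ht : 0 < n'.divisors.card := Finset.card_pos.2 ⟨1, Nat.one_mem_divisors.2 hn'.pos.ne'⟩
  rw [palette, Finset.card_disjSum, Finset.card_disjSum,
    Finset.card_erase_of_mem (Nat.mem_divisors_self n hn0),
    Finset.card_erase_of_mem (Nat.one_mem_divisors.2 hn0), h,
    Nat.card_divisors_two_pow_mul hn', Nat.card_filter_even_divisors_two_pow_mul hn',
    show (α + 1) * n'.divisors.card = α * n'.divisors.card + n'.divisors.card by ring,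
    show (2 * α + 1) * n'.divisors.card = 2 * (α * n'.divisors.card) + n'.divisors.card by ring]
  omega

end DihedralGroup

/-- clique number and chromatic number of `Γ(D_n)`: both equal
`2(τ(n) - 1)` when `n` is odd, and both equal `τ(n) + (2α+1)τ(n') - 2` when
`n = 2^α n'` with `n'` odd, `α ≥ 1`. In particular `Γ(D_n)` is weakly
perfect. -/
theorem stmt_13 (n : ℕ) (hn : 3 ≤ n) :
    (Odd n →
      (permGraph (DihedralGroup n)).cliqueNum = 2 * (n.divisors.card - 1) ∧
      (permGraph (DihedralGroup n)).chromaticNumber =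
        ((2 * (n.divisors.card - 1) : ℕ) : ℕ∞)) ∧
    (∀ α n' : ℕ, Odd n' → 1 ≤ α → n = 2 ^ α * n' →
      (permGraph (DihedralGroup n)).cliqueNum =
        n.divisors.card + (2 * α + 1) * n'.divisors.card - 2 ∧
      (permGraph (DihedralGroup n)).chromaticNumber =
        ((n.divisors.card + (2 * α + 1) * n'.divisors.card - 2 : ℕ) : ℕ∞)) := by
  have : NeZero n := ⟨by omega⟩
  rw [DihedralGroup.cliqueNum_permGraph, DihedralGroup.chromaticNumber_permGraph]
  refine ⟨fun hodd => ?_, fun α n' hn' _ h => ?_⟩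
  · have h := DihedralGroup.card_palette (α := 0) hodd (one_mul n).symm
    constructor <;> congr 1 <;> omega
  · rw [DihedralGroup.card_palette hn' h]
    exact ⟨rfl, rfl⟩
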